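/- Let A be an associative unital ℂ-algebra, m ∈ ℂ, and let a, b, c, d ∈ A satisfy the Jordanian GL_m(2) relations. Set δ = a·d − b·c + m·a·c. Then the 2×2 matrices T = [[a, b], [c, d]] and S = [[d + m·c, −b + m·(d − a) + m²·c], [−c, a − m·c]] satisfy S * T = T * S = δ·I₂ (where δ·I₂ is the 2×2 scalar matrix with δ on the diagonal). -/

import Mathlib

noncomputable section

open Matrix

/-- The defining relations of the Jordanian quantum group `GL_m(2)` for elements
`a, b, c, d` of a unital associative `ℂ`-algebra `A`, with `δ = a·d − b·c + m·a·c`. -/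
def GLm2Relations {A : Type*} [Ring A] [Algebra ℂ A] (m : ℂ) (a b c d : A) : Prop :=
  c * d - d * c = (-m) • (c * c) ∧
  c * b - b * c = (-m) • (a * c + c * d) ∧
  c * a - a * c = (-m) • (c * c) ∧
  d * a - a * d = (-m) • ((d - a) * c) ∧
  d * b - b * d = (-m) • (d * d - (a * d - b * c + m • (a * c))) ∧
  b * a - a * b = (-m) • ((a * d - b * c + m • (a * c)) - a * a)

/-!
Multiplying out, every entry of `S·T − δ·I₂` and of `T·S − δ·I₂` is an explicit `ℂ`-linear
combination of the defining commutation relations, once both sides are expanded into monomials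
in `a, b, c, d`.
-/

theorem Matrix.smul_one_fin_two {α : Type*} [MulZeroOneClass α] (x : α) :
    x • (1 : Matrix (Fin 2) (Fin 2) α) = !![x, 0; 0, x] := by
  ext i j
  fin_cases i <;> fin_cases j <;> simp

theorem Matrix.fin_two_eq_iff {α : Type*} {a₁₁ a₁₂ a₂₁ a₂₂ b₁₁ b₁₂ b₂₁ b₂₂ : α} :
    !![a₁₁, a₁₂; a₂₁, a₂₂] = !![b₁₁, b₁₂; b₂₁, b₂₂] ↔
      a₁₁ = b₁₁ ∧ a₁₂ = b₁₂ ∧ a₂₁ = b₂₁ ∧ a₂₂ = b₂₂ := by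
  simp [and_assoc]

section Jordanian

variable {A : Type*} [Ring A] [Algebra ℂ A]

def jordanianQDet (m : ℂ) (a b c d : A) : A :=
  a * d - b * c + m • (a * c)

def jordanianAntipode (m : ℂ) (a b c d : A) : Matrix (Fin 2) (Fin 2) A :=
  !![d + m • c, -b + m • (d - a) + (m ^ 2) • c; -c, a - m • c]

namespace GLm2Relations

variable {m : ℂ} {a b c d : A}

theorem jordanianAntipode_mul (h : GLm2Relations m a b c d) :
    jordanianAntipode m a b c d * !![a, b; c, d] = jordanianQDet m a b c d • 1 := by
  obtain ⟨-, h₂, h₃, h₄, h₅, -⟩ := h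
  rw [jordanianAntipode, mul_fin_two, smul_one_fin_two, fin_two_eq_iff, jordanianQDet]
  simp only [add_mul, sub_mul, neg_mul, smul_mul_assoc] at h₂ h₃ h₄ h₅ ⊢
  refine ⟨?_, ?_, ?_, ?_⟩
  · linear_combination (norm := module) h₄ + m • h₃
  · linear_combination (norm := module) h₅ + m • h₂
  · linear_combination (norm := module) -h₃
  · linear_combination (norm := module) -h₂

theorem mul_jordanianAntipode (h : GLm2Relations m a b c d) :
    !![a, b; c, d] * jordanianAntipode m a b c d = jordanianQDet m a b c d • 1 := by
  obtain ⟨h₁, h₂, h₃, h₄, -, h₆⟩ := h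
  rw [jordanianAntipode, mul_fin_two, smul_one_fin_two, fin_two_eq_iff, jordanianQDet]
  simp only [sub_mul, mul_add, mul_sub, mul_neg, mul_smul_comm] at h₁ h₂ h₃ h₄ h₆ ⊢
  refine ⟨?_, ?_, ?_, ?_⟩
  · module
  · linear_combination (norm := module) h₆
  · linear_combination (norm := module) h₁
  · linear_combination (norm := module) -h₂ + h₄ - m • h₃ + (2 * m) • h₁

end GLm2Relations

end Jordanian

theorem GLm2_antipode_matrix (A : Type*) [Ring A] [Algebra ℂ A] (m : ℂ)
    (a b c d : A) (h : GLm2Relations m a b c d) :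
    (!![d + m • c, -b + m • (d - a) + (m ^ 2) • c; -c, a - m • c] * !![a, b; c, d] =
        (a * d - b * c + m • (a * c)) • (1 : Matrix (Fin 2) (Fin 2) A)) ∧
    (!![a, b; c, d] * !![d + m • c, -b + m • (d - a) + (m ^ 2) • c; -c, a - m • c] =
        (a * d - b * c + m • (a * c)) • (1 : Matrix (Fin 2) (Fin 2) A)) :=
  ⟨h.jordanianAntipode_mul, h.mul_jordanianAntipode⟩
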